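/- For all non-negative integers x and m, G(x, 0, m) = 1 and G(0, x, m) = 1. -/

import Mathlib

open MeasureTheory Filter

/-- `Ib n m = Σ_{z=0}^{n} ((1 + (-1)^{n-z}) / 2^m) · m!/(z!(m-z)!)`, empty sum for `n < 0`. -/
noncomputable def Ib (n : ℤ) (m : ℕ) : ℝ :=
  ∑ z ∈ Finset.range (n + 1).toNat,
    ((1 + (-1 : ℝ) ^ (n.toNat - z)) / 2 ^ m) * (m.choose z)

/-- The function `G(x, y, m)` of the paper. -/
noncomputable def Gfun (x y m : ℕ) : ℝ :=
  if x = 0 ∧ y = 0 then 1 else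
    ∑ n ∈ Finset.range (m / (2 * (x + y)) + 1),
      (2 * Ib (((m : ℤ) - x) / 2 - ((x : ℤ) + y) * n) (2 * (((m : ℤ) - x) / 2) + x + 2).toNat
       - 2 * Ib (((m : ℤ) - x) / 2 - y - ((x : ℤ) + y) * n) (2 * (((m : ℤ) - x) / 2) + x + 2).toNat
       + 2 * Ib (((m : ℤ) - y) / 2 - ((x : ℤ) + y) * n) (2 * (((m : ℤ) - y) / 2) + y + 2).toNat
       - 2 * Ib (((m : ℤ) - y) / 2 - x - ((x : ℤ) + y) * n) (2 * (((m : ℤ) - y) / 2) + y + 2).toNat)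

/-- The piecewise-linear interpolation `H_{n,m}(t)` of the paper. -/
noncomputable def Hfun (n m : ℕ) (t : ℝ) : ℝ :=
  if (n : ℝ) ≤ |t| then 1 else
    (1 - ((n : ℝ) + t) / 2 + (⌊((n : ℝ) + t) / 2⌋ : ℤ))
        * Gfun (⌊((n : ℝ) + t) / 2⌋).toNat (n - (⌊((n : ℝ) + t) / 2⌋).toNat) m
    + (((n : ℝ) + t) / 2 - (⌊((n : ℝ) + t) / 2⌋ : ℤ))
        * Gfun ((⌊((n : ℝ) + t) / 2⌋).toNat + 1) (n - (⌊((n : ℝ) + t) / 2⌋).toNat - 1) m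

/-!
With `y = 0` the two `x`-terms of `G` cancel and the two `y`-terms telescope in `n`, leaving
`2 I_b(b, 2b + 2)` with `b = ⌊m/2⌋`, because the last index `b - x(⌊m/(2x)⌋ + 1)` is negative.
By Pascal's rule `∑_{z ≤ k} (1 + (-1)^(k-z)) C(n+1, z) = 2 ∑_{z ≤ k} C(n, z)`, and for
`n = 2b + 1, k = b` the right side is `2 · 4^b`, so `I_b(b, 2b + 2) = 1/2`. Finally `G` is
symmetric in `x` and `y`.
-/

open Finset

lemma Ib_of_neg {n : ℤ} (m : ℕ) (hn : n < 0) : Ib n m = 0 := by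
  simp [Ib, show (n + 1).toNat = 0 by omega]

section Binomial

variable {R : Type*} [CommRing R]

lemma sum_range_neg_one_pow_sub_mul_choose (n k : ℕ) :
    ∑ z ∈ range (k + 1), (-1 : R) ^ (k - z) * (n + 1).choose z = n.choose k := by
  induction k with
  | zero => simp
  | succ k ih =>
    have hflip : ∀ z ∈ range (k + 1),
        (-1 : R) ^ (k + 1 - z) * (n + 1).choose z = -((-1 : R) ^ (k - z) * (n + 1).choose z) := by
      intro z hz
      rw [Nat.sub_add_comm (mem_range_succ_iff.mp hz), pow_succ]
      ring
    rw [sum_range_succ, sum_congr rfl hflip, sum_neg_distrib, ih, Nat.choose_succ_succ]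
    simp

lemma sum_range_choose_succ_add_choose (n k : ℕ) :
    ∑ z ∈ range (k + 1), (n + 1).choose z + n.choose k = 2 * ∑ z ∈ range (k + 1), n.choose z := by
  induction k with
  | zero => simp
  | succ k ih =>
    rw [sum_range_succ, sum_range_succ (n.choose ·), Nat.choose_succ_succ']
    omega

lemma sum_range_one_add_neg_one_pow_sub_mul_choose (n k : ℕ) :
    ∑ z ∈ range (k + 1), (1 + (-1 : R) ^ (k - z)) * (n + 1).choose z
      = 2 * ∑ z ∈ range (k + 1), (n.choose z : R) := by
  simp only [add_mul, one_mul, sum_add_distrib, sum_range_neg_one_pow_sub_mul_choose]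
  simpa using congrArg (Nat.cast : ℕ → R) (sum_range_choose_succ_add_choose n k)

end Binomial

lemma Ib_natCast_two_mul_add_two (b : ℕ) : Ib b (2 * b + 2) = 1 / 2 := by
  have hsum := sum_range_one_add_neg_one_pow_sub_mul_choose (R := ℝ) (2 * b + 1) b
  rw [← Nat.cast_sum, Nat.sum_range_choose_halfway] at hsum
  simp only [Ib, show ((b : ℤ) + 1).toNat = b + 1 by omega, Int.toNat_natCast, div_mul_eq_mul_div,
    ← sum_div, hsum]
  push_cast
  rw [pow_succ, pow_succ, pow_mul]
  field_simp
  norm_num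

lemma sum_range_telescope_of_lt {M : Type*} [AddCommGroup M] {f : ℤ → M}
    (hf : ∀ n < 0, f n = 0) {b x : ℤ} {N : ℕ} (h : b < x * N) :
    ∑ n ∈ range N, (f (b - x * n) - f (b - x - x * n)) = f b := by
  have hshift : ∀ n ∈ range N, f (b - x - x * n) = f (b - x * (n + 1 : ℕ)) := by
    intro n _
    push_cast
    ring_nf
  rw [sum_congr rfl fun n hn => by rw [hshift n hn], sum_range_sub' (fun n : ℕ => f (b - x * n)),
    hf (b - x * N) (by linarith), sub_zero, Nat.cast_zero, mul_zero, sub_zero]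

lemma Gfun_comm (x y m : ℕ) : Gfun x y m = Gfun y x m := by
  simp only [Gfun, and_comm, add_comm y x]
  split_ifs
  · rfl
  · refine sum_congr rfl fun n _ => ?_
    ring_nf

lemma Gfun_zero_right (x m : ℕ) : Gfun x 0 m = 1 := by
  rcases Nat.eq_zero_or_pos x with rfl | hx
  · simp [Gfun]
  have hlt : m / 2 < x * (m / (2 * x) + 1) := by
    have := Nat.lt_mul_div_succ m (by omega : 0 < 2 * x)
    rw [mul_assoc] at this
    omega
  rw [Gfun, if_neg (by simp [hx.ne'])]
  simp only [Nat.cast_zero, add_zero, sub_zero, sub_self, zero_add]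
  rw [show (m : ℤ) / 2 = ((m / 2 : ℕ) : ℤ) by omega,
    show (2 * ((m / 2 : ℕ) : ℤ) + 2).toNat = 2 * (m / 2) + 2 by omega,
    sum_range_telescope_of_lt (f := fun k => 2 * Ib k (2 * (m / 2) + 2))
      (fun k hk => by simp [Ib_of_neg _ hk]) (by exact_mod_cast hlt),
    Ib_natCast_two_mul_add_two]
  norm_num

theorem G_boundary_one (x m : ℕ) : Gfun x 0 m = 1 ∧ Gfun 0 x m = 1 :=
  ⟨Gfun_zero_right x m, Gfun_comm 0 x m ▸ Gfun_zero_right x m⟩
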